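/- arXiv:2405.01424 — 2 statements merged into one kernel-verified Lean document; each statement's English description precedes it below -/
import Mathlib

section
/- For every C ∈ 𝔾 and every j ∈ {1, …, n}, the partial derivative of F_j with respect to C_j exists at C and equals (β_j − α_j) + f_j^{(C)}(β_j)/(2(x_{j+1} − x_j)) + f_j^{(C)}(α_j)/(2(x_j − x_{j−1})), where E_j^{(C)} = [α_j, β_j] and the term involving x_{j+1} is omitted when j = n and the term involving x_{j−1} is omitted when j = 1. -/
open MeasureTheory Set
open scoped Classical

/-- `f_j^{(C)}(t) = C_j - (t - x_j)^2`. -/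
noncomputable def fj (n : ℕ) (x C : Fin n → ℝ) (j : Fin n) (t : ℝ) : ℝ :=
  C j - (t - x j) ^ 2

/-- `f^{(C)}(t) = max{f_1^{(C)}(t), …, f_n^{(C)}(t), 0}`. -/
noncomputable def fmax (n : ℕ) (x C : Fin n → ℝ) (t : ℝ) : ℝ :=
  max (⨆ j : Fin n, fj n x C j t) 0

/-- `E_j^{(C)} = {t : f_j^{(C)}(t) = f^{(C)}(t)}`. -/
def Ej (n : ℕ) (x C : Fin n → ℝ) (j : Fin n) : Set ℝ :=
  {t | fj n x C j t = fmax n x C t}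

/-- `F_j(C) = ∫_{E_j^{(C)}} f^{(C)}` if `E_j^{(C)} ≠ ∅`, else `0`. -/
noncomputable def Fj (n : ℕ) (x C : Fin n → ℝ) (j : Fin n) : ℝ :=
  if (Ej n x C j).Nonempty then ∫ t in Ej n x C j, fmax n x C t else 0

/-- `F(C) = (F_1(C), …, F_n(C))`. -/
noncomputable def Fvec (n : ℕ) (x C : Fin n → ℝ) : Fin n → ℝ :=
  fun j => Fj n x C j

/-- `𝔾 = {C : F_j(C) > 0 for all j}`. -/
def Gset (n : ℕ) (x : Fin n → ℝ) : Set (Fin n → ℝ) :=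
  {C | ∀ j, 0 < Fj n x C j}

/-- `γ_{ij}(C) = (C_i - C_j)/(2(x_j - x_i)) + (x_i + x_j)/2`. -/
noncomputable def gam (n : ℕ) (x C : Fin n → ℝ) (i j : Fin n) : ℝ :=
  (C i - C j) / (2 * (x j - x i)) + (x i + x j) / 2

/-!
Replace `C_j` by `t`. Two parabolas of equal curvature cross exactly once, so a parabola that
dominates the ones further left at some point `p` dominates them on `[p, ∞)`. Apply this to
`f_{j-1}` at `p = α_{j-1}` and, mirrored, to `f_{j+1}` at `β_{j+1}`: as `α_{j-1} < β_{j-1} ≤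
γ_{j-1,j}` and `γ_{j,j+1} ≤ α_{j+1} < β_{j+1}`, the endpoints of `E_j` stay strictly between
`α_{j-1}` and `β_{j+1}` for `t` near `C_j`, so only the roots `x_j ∓ √t` of `f_j` and the crossings
`γ` with the neighbours `f_{j±1}` bound `E_j`: it is `[a(t), b(t)]` with `a = max (x_j - √t)
γ_{j-1,j}` and `b = min (x_j + √t) γ_{j,j+1}`. Thus `F_j(t) = Φ(t, b(t)) - Φ(t, a(t))` with `Φ(t, u)
= t u - (u - x_j)³/3`, and `d/dt Φ(t, e(t)) = e + f_j(e) e'`. On a root branch `f_j(e) = 0`, on a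
crossing branch `e' = ∓1/(2(x_{j±1} - x_j))`; where two branches meet both formulas agree, which
makes the max and the min differentiable.
-/

section Parabolas

variable {n : ℕ} {x C : Fin n → ℝ} {i j k : Fin n} {p s : ℝ}

theorem mem_Ej_iff : s ∈ Ej n x C j ↔ 0 ≤ fj n x C j s ∧ ∀ i, fj n x C i s ≤ fj n x C j s := by
  have : Nonempty (Fin n) := ⟨j⟩
  have hbdd : BddAbove (range fun i => fj n x C i s) := (finite_range _).bddAbove
  have hle : fj n x C j s ≤ fmax n x C s := (le_ciSup hbdd j).trans (le_max_left _ _)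
  refine ⟨fun h => ?_, fun ⟨h0, hall⟩ => le_antisymm hle (max_le (ciSup_le hall) h0)⟩
  have h : fj n x C j s = fmax n x C s := h
  exact ⟨h ▸ le_max_right _ _, fun i => h ▸ (le_ciSup hbdd i).trans (le_max_left _ _)⟩

theorem fj_sub_fj (h : x i ≠ x j) :
    fj n x C i s - fj n x C j s = 2 * (x i - x j) * (s - gam n x C i j) := by
  have : x j - x i ≠ 0 := sub_ne_zero.2 h.symm
  unfold fj gam
  field_simp
  ring

theorem gam_le_iff (h : x i < x j) : gam n x C i j ≤ s ↔ fj n x C i s ≤ fj n x C j s := by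
  have := fj_sub_fj (C := C) (s := s) h.ne
  constructor <;> intro <;> nlinarith

theorem le_gam_iff (h : x i < x j) : s ≤ gam n x C i j ↔ fj n x C j s ≤ fj n x C i s := by
  have := fj_sub_fj (C := C) (s := s) h.ne
  constructor <;> intro <;> nlinarith

theorem fj_le_fj_of_le (hx : x i ≤ x k) (hp : fj n x C i p ≤ fj n x C k p) (hs : p ≤ s) :
    fj n x C i s ≤ fj n x C k s := by
  unfold fj at *
  nlinarith

theorem fj_le_fj_of_ge (hx : x k ≤ x i) (hp : fj n x C i p ≤ fj n x C k p) (hs : s ≤ p) :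
    fj n x C i s ≤ fj n x C k s := by
  unfold fj at *
  nlinarith

theorem fj_nonneg_iff (h : 0 ≤ C j) :
    0 ≤ fj n x C j s ↔ x j - √(C j) ≤ s ∧ s ≤ x j + √(C j) := by
  rw [fj, sub_nonneg, Real.sq_le h]
  constructor <;> rintro ⟨h₁, h₂⟩ <;> constructor <;> linarith

end Parabolas

def prevIdx {n : ℕ} (j : Fin n) : Fin n :=
  ⟨j.val - 1, lt_of_le_of_lt (Nat.sub_le _ _) j.isLt⟩

theorem prevIdx_lt {n : ℕ} {j : Fin n} (hj : 0 < j.val) : prevIdx j < j := by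
  show j.val - 1 < j.val
  omega

theorem le_prevIdx_of_lt {n : ℕ} {i j : Fin n} (h : i < j) : i ≤ prevIdx j := by
  rw [Fin.lt_def] at h
  show i.val ≤ j.val - 1
  omega

section Endpoints

variable (n : ℕ) (x C : Fin n → ℝ) (j : Fin n)

noncomputable def lowerEnd : ℝ :=
  if 0 < j.val then max (x j - √(C j)) (gam n x C (prevIdx j) j) else x j - √(C j)

noncomputable def upperEnd : ℝ :=
  if h : j.val + 1 < n then min (x j + √(C j)) (gam n x C j ⟨j.val + 1, h⟩) else x j + √(C j)

variable {n x C j} {s : ℝ}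

theorem lowerEnd_le_iff (hx : StrictMono x)
    (hl : 0 < j.val → ∃ p ≤ lowerEnd n x C j,
      ∀ i ≤ prevIdx j, fj n x C i p ≤ fj n x C (prevIdx j) p) :
    lowerEnd n x C j ≤ s ↔ x j - √(C j) ≤ s ∧ ∀ i < j, fj n x C i s ≤ fj n x C j s := by
  by_cases hj : 0 < j.val
  · obtain ⟨p, hp, hdom⟩ := hl hj
    have hprev := hx (prevIdx_lt hj)
    rw [lowerEnd, if_pos hj] at hp ⊢
    rw [max_le_iff]
    refine ⟨fun ⟨hr, hγ⟩ => ⟨hr, fun i hi => ?_⟩,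
      fun ⟨hr, hall⟩ => ⟨hr, (gam_le_iff hprev).2 (hall _ (prevIdx_lt hj))⟩⟩
    have hi' := le_prevIdx_of_lt hi
    exact (fj_le_fj_of_le (hx.monotone hi') (hdom i hi') (hp.trans (max_le hr hγ))).trans
      ((gam_le_iff hprev).1 hγ)
  · have hnone : ∀ i, ¬ i < j := fun i hi => hj (lt_of_le_of_lt (Nat.zero_le _) hi)
    simp [lowerEnd, hj, hnone]

theorem le_upperEnd_iff (hx : StrictMono x)
    (hu : ∀ h : j.val + 1 < n, ∃ p ≥ upperEnd n x C j,
      ∀ i ≥ (⟨j.val + 1, h⟩ : Fin n), fj n x C i p ≤ fj n x C ⟨j.val + 1, h⟩ p) :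
    s ≤ upperEnd n x C j ↔ s ≤ x j + √(C j) ∧ ∀ i > j, fj n x C i s ≤ fj n x C j s := by
  by_cases hj : j.val + 1 < n
  · obtain ⟨p, hp, hdom⟩ := hu hj
    have hnext : x j < x ⟨j.val + 1, hj⟩ := hx (Fin.lt_def.2 (Nat.lt_succ_self _))
    rw [upperEnd, dif_pos hj] at hp ⊢
    rw [le_min_iff]
    refine ⟨fun ⟨hR, hγ⟩ => ⟨hR, fun i hi => ?_⟩,
      fun ⟨hR, hall⟩ => ⟨hR, (le_gam_iff hnext).2 (hall _ (Fin.lt_def.2 (Nat.lt_succ_self _)))⟩⟩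
    have hi' : (⟨j.val + 1, hj⟩ : Fin n) ≤ i := Fin.le_def.2 (Fin.lt_def.1 hi)
    exact (fj_le_fj_of_ge (hx.monotone hi') (hdom i hi') ((le_min hR hγ).trans hp)).trans
      ((le_gam_iff hnext).1 hγ)
  · have hnone : ∀ i, ¬ j < i := fun i hi => hj (lt_of_le_of_lt (Fin.lt_def.1 hi) i.isLt)
    simp [upperEnd, hj, hnone]

theorem Ej_eq_Icc (hx : StrictMono x) (hC : 0 ≤ C j)
    (hl : 0 < j.val → ∃ p ≤ lowerEnd n x C j,
      ∀ i ≤ prevIdx j, fj n x C i p ≤ fj n x C (prevIdx j) p)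
    (hu : ∀ h : j.val + 1 < n, ∃ p ≥ upperEnd n x C j,
      ∀ i ≥ (⟨j.val + 1, h⟩ : Fin n), fj n x C i p ≤ fj n x C ⟨j.val + 1, h⟩ p) :
    Ej n x C j = Icc (lowerEnd n x C j) (upperEnd n x C j) := by
  ext s
  rw [mem_Ej_iff, fj_nonneg_iff hC, mem_Icc, lowerEnd_le_iff hx hl, le_upperEnd_iff hx hu]
  constructor
  · rintro ⟨⟨hr, hR⟩, hall⟩
    exact ⟨⟨hr, fun i _ => hall i⟩, hR, fun i _ => hall i⟩
  · rintro ⟨⟨hr, hlt⟩, hR, hgt⟩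
    refine ⟨⟨hr, hR⟩, fun i => ?_⟩
    rcases lt_trichotomy i j with h | rfl | h
    exacts [hlt i h, le_rfl, hgt i h]

end Endpoints

noncomputable def parabolaPrimitive (c t u : ℝ) : ℝ :=
  t * u - (u - c) ^ 3 / 3

theorem hasDerivAt_parabolaPrimitive (c t u : ℝ) :
    HasDerivAt (parabolaPrimitive c t) (t - (u - c) ^ 2) u := by
  have := ((hasDerivAt_id u).const_mul t).sub
    ((((hasDerivAt_id u).sub_const c).pow 3).div_const 3)
  exact this.congr_deriv (by simp)

theorem hasDerivAt_parabolaPrimitive_comp {c t₀ g' : ℝ} {g : ℝ → ℝ} (hg : HasDerivAt g g' t₀) :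
    HasDerivAt (fun t => parabolaPrimitive c t (g t)) (g t₀ + (t₀ - (g t₀ - c) ^ 2) * g') t₀ := by
  have := ((hasDerivAt_id t₀).mul hg).sub (((hg.sub_const c).pow 3).div_const 3)
  exact this.congr_deriv (by simp; ring)

section Integral

variable {n : ℕ} {x C : Fin n → ℝ} {j : Fin n} {a b : ℝ}

theorem Fj_eq_of_Ej_eq_Icc (h : Ej n x C j = Icc a b) (hab : a ≤ b) :
    Fj n x C j = parabolaPrimitive (x j) (C j) b - parabolaPrimitive (x j) (C j) a := by
  have heq : EqOn (fmax n x C) (fj n x C j) (Icc a b) := fun s hs =>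
    (show s ∈ Ej n x C j from h ▸ hs).symm
  rw [Fj, if_pos (h ▸ nonempty_Icc.2 hab), h, setIntegral_congr_fun measurableSet_Icc heq,
    integral_Icc_eq_integral_Ioc, ← intervalIntegral.integral_of_le hab]
  exact intervalIntegral.integral_eq_sub_of_hasDerivAt
    (fun s _ => hasDerivAt_parabolaPrimitive _ _ s)
    (Continuous.intervalIntegrable (by unfold fj; fun_prop) _ _)

theorem lt_of_Fj_pos (h : 0 < Fj n x C j) (hE : Ej n x C j = Icc a b) : a < b := by
  by_contra! hba
  have hzero : volume (Icc a b) = 0 := (subsingleton_Icc_of_ge hba).measure_zero _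
  simp [Fj, hE, Measure.restrict_eq_zero.2 hzero] at h

theorem pos_of_Ej_eq_Icc (hE : Ej n x C j = Icc a b) (hab : a < b) : 0 < C j := by
  have ha := (mem_Ej_iff.1 (hE ▸ left_mem_Icc.2 hab.le : a ∈ Ej n x C j)).1
  have hb := (mem_Ej_iff.1 (hE ▸ right_mem_Icc.2 hab.le : b ∈ Ej n x C j)).1
  unfold fj at ha hb
  nlinarith [sq_nonneg (a + b - 2 * x j), mul_pos (sub_pos.2 hab) (sub_pos.2 hab)]

end Integral

section Derivatives

open Filter Topology

theorem HasDerivAt.of_forall_eq_or_eq {f g h : ℝ → ℝ} {d t₀ : ℝ}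
    (hf : HasDerivAt f d t₀) (hg : HasDerivAt g d t₀) (hfg : f t₀ = g t₀)
    (hh : ∀ t, h t = f t ∨ h t = g t) : HasDerivAt h d t₀ := by
  have h₀ : h t₀ = f t₀ := (hh t₀).elim id (·.trans hfg.symm)
  rw [hasDerivAt_iff_isLittleO, Asymptotics.isLittleO_iff] at hf hg ⊢
  intro c hc
  filter_upwards [hf hc, hg hc] with t hft hgt
  rcases hh t with e | e
  · rwa [e, h₀]
  · rwa [e, h₀, hfg]

theorem hasDerivAt_comp_max {Ψ : ℝ → ℝ → ℝ} {g₁ g₂ : ℝ → ℝ} {d t₀ : ℝ}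
    (hc₁ : ContinuousAt g₁ t₀) (hc₂ : ContinuousAt g₂ t₀)
    (h₁ : g₂ t₀ ≤ g₁ t₀ → HasDerivAt (fun t => Ψ t (g₁ t)) d t₀)
    (h₂ : g₁ t₀ ≤ g₂ t₀ → HasDerivAt (fun t => Ψ t (g₂ t)) d t₀) :
    HasDerivAt (fun t => Ψ t (max (g₁ t) (g₂ t))) d t₀ := by
  rcases lt_trichotomy (g₁ t₀) (g₂ t₀) with h | h | h
  · refine (h₂ h.le).congr_of_eventuallyEq ?_
    filter_upwards [hc₁.eventually_lt hc₂ h] with t ht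
    rw [max_eq_right ht.le]
  · refine (h₁ h.ge).of_forall_eq_or_eq (h₂ h.le) (by rw [h]) fun t => ?_
    rcases max_choice (g₁ t) (g₂ t) with e | e <;> simp [e]
  · refine (h₁ h.le).congr_of_eventuallyEq ?_
    filter_upwards [hc₂.eventually_lt hc₁ h] with t ht
    rw [max_eq_left ht.le]

theorem hasDerivAt_comp_min {Ψ : ℝ → ℝ → ℝ} {g₁ g₂ : ℝ → ℝ} {d t₀ : ℝ}
    (hc₁ : ContinuousAt g₁ t₀) (hc₂ : ContinuousAt g₂ t₀)
    (h₁ : g₁ t₀ ≤ g₂ t₀ → HasDerivAt (fun t => Ψ t (g₁ t)) d t₀)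
    (h₂ : g₂ t₀ ≤ g₁ t₀ → HasDerivAt (fun t => Ψ t (g₂ t)) d t₀) :
    HasDerivAt (fun t => Ψ t (min (g₁ t) (g₂ t))) d t₀ := by
  have := hasDerivAt_comp_max (Ψ := fun t u => Ψ t (-u)) hc₁.neg hc₂.neg
    (by simpa using h₁) (by simpa using h₂)
  simpa [max_neg_neg] using this

variable {n : ℕ} {x C : Fin n → ℝ} {i j : Fin n} {t₀ : ℝ}

theorem hasDerivAt_gam_update_snd (hij : i ≠ j) :
    HasDerivAt (fun t => gam n x (Function.update C j t) i j) (-1 / (2 * (x j - x i))) t₀ := by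
  simp only [gam, Function.update_self, Function.update_of_ne hij]
  exact (((hasDerivAt_id t₀).const_sub (C i)).div_const _).add_const _ |>.congr_deriv (by ring)

theorem hasDerivAt_gam_update_fst (hij : i ≠ j) :
    HasDerivAt (fun t => gam n x (Function.update C i t) i j) (1 / (2 * (x j - x i))) t₀ := by
  simp only [gam, Function.update_self, Function.update_of_ne hij.symm]
  exact (((hasDerivAt_id t₀).sub_const (C j)).div_const _).add_const _ |>.congr_deriv (by ring)

end Derivatives

section EndpointDerivatives

variable {n : ℕ} {x C : Fin n → ℝ} {j : Fin n}

theorem hasDerivAt_parabolaPrimitive_lowerEnd (hC : 0 < C j) :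
    HasDerivAt (fun t => parabolaPrimitive (x j) t (lowerEnd n x (Function.update C j t) j))
      (lowerEnd n x C j - if 0 < j.val then
        fj n x C j (lowerEnd n x C j) / (2 * (x j - x (prevIdx j))) else 0) (C j) := by
  have hsqrt : HasDerivAt (fun t => x j - √t) (-(1 / (2 * √(C j)))) (C j) :=
    (Real.hasDerivAt_sqrt hC.ne').const_sub _
  have hr : HasDerivAt (fun t => parabolaPrimitive (x j) t (x j - √t)) (x j - √(C j)) (C j) :=
    (hasDerivAt_parabolaPrimitive_comp hsqrt).congr_deriv
      (by rw [sub_sub_cancel_left, neg_sq, Real.sq_sqrt hC.le]; ring)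
  have hfr : fj n x C j (x j - √(C j)) = 0 := by simp [fj, Real.sq_sqrt hC.le]
  by_cases hj : 0 < j.val
  · have hγ := hasDerivAt_gam_update_snd (x := x) (C := C) (t₀ := C j) (prevIdx_lt hj).ne
    simp only [lowerEnd, if_pos hj, Function.update_self]
    refine hasDerivAt_comp_max (Ψ := parabolaPrimitive (x j))
      hsqrt.continuousAt hγ.continuousAt (fun hle => ?_) (fun hle => ?_)
    · rw [Function.update_eq_self] at hle
      rwa [max_eq_left hle, hfr, zero_div, sub_zero]
    · rw [Function.update_eq_self] at hle
      rw [max_eq_right hle]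
      refine (hasDerivAt_parabolaPrimitive_comp hγ).congr_deriv ?_
      simp only [Function.update_eq_self, fj]
      ring
  · simpa [lowerEnd, hj] using hr

theorem hasDerivAt_parabolaPrimitive_upperEnd (hC : 0 < C j) :
    HasDerivAt (fun t => parabolaPrimitive (x j) t (upperEnd n x (Function.update C j t) j))
      (upperEnd n x C j + if h : j.val + 1 < n then
        fj n x C j (upperEnd n x C j) / (2 * (x ⟨j.val + 1, h⟩ - x j)) else 0) (C j) := by
  have hsqrt : HasDerivAt (fun t => x j + √t) (1 / (2 * √(C j))) (C j) :=
    (Real.hasDerivAt_sqrt hC.ne').const_add _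
  have hR : HasDerivAt (fun t => parabolaPrimitive (x j) t (x j + √t)) (x j + √(C j)) (C j) :=
    (hasDerivAt_parabolaPrimitive_comp hsqrt).congr_deriv
      (by rw [add_sub_cancel_left, Real.sq_sqrt hC.le]; ring)
  have hfR : fj n x C j (x j + √(C j)) = 0 := by simp [fj, Real.sq_sqrt hC.le]
  by_cases hj : j.val + 1 < n
  · have hne : j ≠ ⟨j.val + 1, hj⟩ := Fin.ne_of_val_ne (Nat.succ_ne_self _).symm
    have hγ := hasDerivAt_gam_update_fst (x := x) (C := C) (t₀ := C j) hne
    simp only [upperEnd, dif_pos hj, Function.update_self]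
    refine hasDerivAt_comp_min (Ψ := parabolaPrimitive (x j))
      hsqrt.continuousAt hγ.continuousAt (fun hle => ?_) (fun hle => ?_)
    · rw [Function.update_eq_self] at hle
      rwa [min_eq_left hle, hfR, zero_div, add_zero]
    · rw [Function.update_eq_self] at hle
      rw [min_eq_right hle]
      refine (hasDerivAt_parabolaPrimitive_comp hγ).congr_deriv ?_
      simp only [Function.update_eq_self, fj]
      ring
  · simpa [upperEnd, hj] using hR

end EndpointDerivatives

section LocalStructure

open Filter Topology

variable {n : ℕ} {x C α β : Fin n → ℝ} {i j : Fin n}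

theorem fj_update_of_ne {t : ℝ} (h : i ≠ j) : fj n x (Function.update C j t) i = fj n x C i := by
  ext s
  simp only [fj, Function.update_of_ne h]

theorem continuous_lowerEnd_update : Continuous fun t => lowerEnd n x (Function.update C j t) j := by
  by_cases hj : 0 < j.val
  · simp only [lowerEnd, if_pos hj, gam, Function.update_self,
      Function.update_of_ne (prevIdx_lt hj).ne]
    fun_prop
  · simp only [lowerEnd, if_neg hj, Function.update_self]
    fun_prop

theorem continuous_upperEnd_update : Continuous fun t => upperEnd n x (Function.update C j t) j := by
  by_cases hj : j.val + 1 < n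
  · have hne : (⟨j.val + 1, hj⟩ : Fin n) ≠ j := Fin.ne_of_val_ne (Nat.succ_ne_self _)
    simp only [upperEnd, dif_pos hj, gam, Function.update_self, Function.update_of_ne hne]
    fun_prop
  · simp only [upperEnd, dif_neg hj, Function.update_self]
    fun_prop

variable (hx : StrictMono x) (hE : ∀ i, Ej n x C i = Icc (α i) (β i)) (hαβ : ∀ i, α i < β i)
include hx hE hαβ

theorem lt_lowerEnd (hj : 0 < j.val) : α (prevIdx j) < lowerEnd n x C j := by
  have hβ : β (prevIdx j) ∈ Ej n x C (prevIdx j) := hE _ ▸ right_mem_Icc.2 (hαβ _).le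
  have := (le_gam_iff (hx (prevIdx_lt hj))).2 ((mem_Ej_iff.1 hβ).2 j)
  rw [lowerEnd, if_pos hj]
  exact (hαβ _).trans_le (this.trans (le_max_right _ _))

theorem upperEnd_lt (hj : j.val + 1 < n) : upperEnd n x C j < β ⟨j.val + 1, hj⟩ := by
  have hα : α ⟨j.val + 1, hj⟩ ∈ Ej n x C ⟨j.val + 1, hj⟩ := hE _ ▸ left_mem_Icc.2 (hαβ _).le
  have := (gam_le_iff (hx (Fin.lt_def.2 (Nat.lt_succ_self _)))).2 ((mem_Ej_iff.1 hα).2 j)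
  rw [upperEnd, dif_pos hj]
  exact ((min_le_right _ _).trans this).trans_lt (hαβ _)

theorem eventually_Ej_update_eq_Icc (hC : 0 < C j) :
    ∀ᶠ t in 𝓝 (C j), Ej n x (Function.update C j t) j =
      Icc (lowerEnd n x (Function.update C j t) j) (upperEnd n x (Function.update C j t) j) := by
  have hl : ∀ᶠ t in 𝓝 (C j), 0 < j.val →
      α (prevIdx j) < lowerEnd n x (Function.update C j t) j := by
    by_cases hj : 0 < j.val
    · have hcont := (continuous_lowerEnd_update (x := x) (C := C) (j := j)).tendsto (C j)
      simp only [Function.update_eq_self] at hcont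
      filter_upwards [hcont.eventually_const_lt (lt_lowerEnd hx hE hαβ hj)] with t ht _ using ht
    · exact Eventually.of_forall fun _ h => absurd h hj
  have hu : ∀ᶠ t in 𝓝 (C j), ∀ h : j.val + 1 < n,
      upperEnd n x (Function.update C j t) j < β ⟨j.val + 1, h⟩ := by
    by_cases hj : j.val + 1 < n
    · have hcont := (continuous_upperEnd_update (x := x) (C := C) (j := j)).tendsto (C j)
      simp only [Function.update_eq_self] at hcont
      filter_upwards [hcont.eventually_lt_const (upperEnd_lt hx hE hαβ hj)] with t ht _ using ht
    · exact Eventually.of_forall fun _ h => absurd h hj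
  filter_upwards [eventually_gt_nhds hC, hl, hu] with t ht hlt hut
  refine Ej_eq_Icc hx (by simpa using ht.le) (fun hj => ⟨_, (hlt hj).le, fun i hi => ?_⟩)
    (fun hj => ⟨_, (hut hj).le, fun i hi => ?_⟩)
  · have hα : α (prevIdx j) ∈ Ej n x C (prevIdx j) := hE _ ▸ left_mem_Icc.2 (hαβ _).le
    rw [fj_update_of_ne (hi.trans_lt (prevIdx_lt hj)).ne, fj_update_of_ne (prevIdx_lt hj).ne]
    exact (mem_Ej_iff.1 hα).2 i
  · have hlt : j < ⟨j.val + 1, hj⟩ := Fin.lt_def.2 (Nat.lt_succ_self _)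
    have hβ : β ⟨j.val + 1, hj⟩ ∈ Ej n x C ⟨j.val + 1, hj⟩ := hE _ ▸ right_mem_Icc.2 (hαβ _).le
    rw [fj_update_of_ne (hlt.trans_le hi).ne', fj_update_of_ne hlt.ne']
    exact (mem_Ej_iff.1 hβ).2 i

theorem lowerEnd_eq_and_upperEnd_eq (hC : 0 < C j) :
    lowerEnd n x C j = α j ∧ upperEnd n x C j = β j := by
  have := (eventually_Ej_update_eq_Icc hx hE hαβ hC).self_of_nhds
  rw [Function.update_eq_self, hE j, Icc_eq_Icc_iff (hαβ j).le] at this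
  exact ⟨this.1.symm, this.2.symm⟩

theorem Fj_update_eventuallyEq (hC : 0 < C j) :
    (fun t => Fj n x (Function.update C j t) j) =ᶠ[𝓝 (C j)] fun t =>
      parabolaPrimitive (x j) t (upperEnd n x (Function.update C j t) j) -
        parabolaPrimitive (x j) t (lowerEnd n x (Function.update C j t) j) := by
  obtain ⟨hα, hβ⟩ := lowerEnd_eq_and_upperEnd_eq hx hE hαβ hC
  have hlt := (continuous_lowerEnd_update (x := x) (C := C) (j := j)).continuousAt.eventually_lt
    (continuous_upperEnd_update (x := x) (C := C) (j := j)).continuousAt (x₀ := C j)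
    (by simpa [Function.update_eq_self, hα, hβ] using hαβ j)
  filter_upwards [eventually_Ej_update_eq_Icc hx hE hαβ hC, hlt] with t hEt hab
  rw [Fj_eq_of_Ej_eq_Icc hEt hab.le, Function.update_self]

end LocalStructure

theorem stmt_12_general (n : ℕ) (x : Fin n → ℝ) (hx : StrictMono x)
    (C : Fin n → ℝ) (hC : C ∈ Gset n x) (α β : Fin n → ℝ)
    (hE : ∀ j, Ej n x C j = Set.Icc (α j) (β j)) :
    ∀ j : Fin n,
      HasDerivAt (fun t : ℝ => Fj n x (Function.update C j t) j)
        ((β j - α j) +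
          (if h : j.val + 1 < n then
              fj n x C j (β j) / (2 * (x ⟨j.val + 1, h⟩ - x j))
            else 0) +
          (if _ : 0 < j.val then
              fj n x C j (α j) /
                (2 * (x j - x ⟨j.val - 1, lt_of_le_of_lt (Nat.sub_le _ _) j.isLt⟩))
            else 0))
        (C j) := by
  intro j
  have hαβ : ∀ i, α i < β i := fun i => lt_of_Fj_pos (hC i) (hE i)
  have hCj : 0 < C j := pos_of_Ej_eq_Icc (hE j) (hαβ j)
  obtain ⟨hα, hβ⟩ := lowerEnd_eq_and_upperEnd_eq hx hE hαβ hCj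
  have hderiv := (hasDerivAt_parabolaPrimitive_upperEnd (x := x) hCj).sub
    (hasDerivAt_parabolaPrimitive_lowerEnd (x := x) hCj)
  refine (hderiv.congr_of_eventuallyEq (Fj_update_eventuallyEq hx hE hαβ hCj)).congr_deriv ?_
  rw [hα, hβ]
  simp only [dite_eq_ite, prevIdx]
  ring

/-- For `C ∈ 𝔾` with `E_j^{(C)} = [α_j, β_j]`, the partial derivative of `F_j`
in the direction `C_j` exists at `C` and equals
`(β_j - α_j) + f_j^{(C)}(β_j)/(2(x_{j+1} - x_j)) + f_j^{(C)}(α_j)/(2(x_j - x_{j-1}))`,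
the corresponding term being omitted when `j = n` (resp. `j = 1`). -/
theorem stmt_12 (n : ℕ) (hn : 1 ≤ n) (x : Fin n → ℝ) (hx : StrictMono x)
    (C : Fin n → ℝ) (hC : C ∈ Gset n x) (α β : Fin n → ℝ)
    (hE : ∀ j, Ej n x C j = Set.Icc (α j) (β j)) :
    ∀ j : Fin n,
      HasDerivAt (fun t : ℝ => Fj n x (Function.update C j t) j)
        ((β j - α j) +
          (if h : j.val + 1 < n then
              fj n x C j (β j) / (2 * (x ⟨j.val + 1, h⟩ - x j))
            else 0) +
          (if _ : 0 < j.val then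
              fj n x C j (α j) /
                (2 * (x j - x ⟨j.val - 1, lt_of_le_of_lt (Nat.sub_le _ _) j.isLt⟩))
            else 0))
        (C j) :=
  stmt_12_general n x hx C hC α β hE
end

section
/- The map F : ℝ^n → ℝ^n, C ↦ (F_1(C), …, F_n(C)), is continuous on all of ℝ^n. -/
open MeasureTheory Set
open scoped Classical

/-!
Write `F_j(C) = ∫ 1_{E_j^{(C)}}(t) f^{(C)}(t) dt` and apply dominated convergence. Near `C₀` the
integrand is bounded by `‖C₀‖ + 1` and vanishes off a fixed compact interval around `x_j`.
For fixed `t` it is continuous in `C` at `C₀` unless `t` is one of the finitely many tie points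
`γ_{jk}(C₀)`, `k ≠ j`: away from them, either `f_j^{(C₀)}(t) < f^{(C₀)}(t)`, so the integrand is `0`
near `C₀`; or `f^{(C₀)}(t) = 0`, so it is squeezed between `0` and `f^{(C)}(t)`; or `f_j^{(C₀)}(t)`
is the strict positive maximum, so the integrand equals `f^{(C)}(t)` near `C₀`.
-/

open Filter Topology

section
variable {n : ℕ} {x : Fin n → ℝ}

lemma fmax_nonneg (C : Fin n → ℝ) (t : ℝ) : 0 ≤ fmax n x C t := le_max_right _ _

lemma eq_gam_of_fj_eq {j k : Fin n} (hjk : x j ≠ x k) {C : Fin n → ℝ} {t : ℝ}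
    (h : fj n x C j t = fj n x C k t) : t = gam n x C j k := by
  have hne : x k - x j ≠ 0 := sub_ne_zero.mpr hjk.symm
  rw [fj, fj] at h
  rw [gam]
  field_simp
  linear_combination -h

lemma continuous_fj_left (j : Fin n) (t : ℝ) : Continuous fun C => fj n x C j t := by
  unfold fj
  fun_prop

lemma mem_Ej {C : Fin n → ℝ} {j : Fin n} {t : ℝ} :
    t ∈ Ej n x C j ↔ fj n x C j t = fmax n x C t := Iff.rfl

lemma fj_le_fmax (C : Fin n → ℝ) (j : Fin n) (t : ℝ) : fj n x C j t ≤ fmax n x C t :=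
  (le_ciSup (f := fun k => fj n x C k t) (Finite.bddAbove_range _) j).trans (le_max_left _ _)

lemma mem_Icc_of_mem_Ej {C : Fin n → ℝ} {j : Fin n} {M : ℝ} (hC : C j ≤ M) {t : ℝ}
    (ht : t ∈ Ej n x C j) : t ∈ Icc (x j - √M) (x j + √M) := by
  have hfj : 0 ≤ fj n x C j t := ht ▸ fmax_nonneg C t
  have hsq : (t - x j) ^ 2 ≤ M := by rw [fj] at hfj; linarith
  obtain ⟨hlo, hhi⟩ := abs_le.mp (Real.abs_le_sqrt hsq)
  exact ⟨by linarith, by linarith⟩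

end

section
variable {n : ℕ} {x : Fin n → ℝ} [Nonempty (Fin n)]

lemma continuous_fmax : Continuous fun p : (Fin n → ℝ) × ℝ => fmax n x p.1 p.2 := by
  simp only [fmax, ← Finset.sup'_univ_eq_ciSup]
  refine (Continuous.finset_sup'_apply _ fun j _ => ?_).max continuous_const
  unfold fj
  fun_prop

lemma fmax_le {C : Fin n → ℝ} {M : ℝ} (hM : 0 ≤ M) (hC : ∀ j, C j ≤ M) (t : ℝ) :
    fmax n x C t ≤ M :=
  max_le (ciSup_le fun j => (sub_le_self _ (sq_nonneg (t - x j))).trans (hC j)) hM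

lemma fmax_eq_fj_of_forall_le {C : Fin n → ℝ} {j : Fin n} {t : ℝ}
    (h : ∀ k, fj n x C k t ≤ fj n x C j t) (h0 : 0 ≤ fj n x C j t) :
    fmax n x C t = fj n x C j t := by
  have hsup : ⨆ k, fj n x C k t = fj n x C j t :=
    le_antisymm (ciSup_le h) (le_ciSup (f := fun k => fj n x C k t) (Finite.bddAbove_range _) j)
  rw [fmax, hsup, max_eq_left h0]

lemma continuous_fmax_left (t : ℝ) : Continuous fun C => fmax n x C t :=
  continuous_fmax.comp (continuous_id.prodMk continuous_const)

lemma continuous_fmax_right (C : Fin n → ℝ) : Continuous (fmax n x C) :=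
  continuous_fmax.comp (continuous_const.prodMk continuous_id)

lemma measurableSet_Ej (C : Fin n → ℝ) (j : Fin n) : MeasurableSet (Ej n x C j) :=
  (isClosed_eq (by unfold fj; fun_prop) (continuous_fmax_right C)).measurableSet

lemma Fj_eq_integral_indicator (C : Fin n → ℝ) (j : Fin n) :
    Fj n x C j = ∫ t, (Ej n x C j).indicator (fmax n x C) t := by
  rw [Fj, integral_indicator (measurableSet_Ej C j)]
  split_ifs with h
  · rfl
  · rw [not_nonempty_iff_eq_empty.mp h, Measure.restrict_empty, integral_zero_measure]

lemma norm_indicator_Ej_fmax_le {C : Fin n → ℝ} {M : ℝ} (hM : 0 ≤ M) (hC : ∀ k, C k ≤ M)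
    (j : Fin n) (t : ℝ) :
    ‖(Ej n x C j).indicator (fmax n x C) t‖ ≤
      (Icc (x j - √M) (x j + √M)).indicator (fun _ => M) t := by
  by_cases ht : t ∈ Ej n x C j
  · rw [indicator_of_mem ht, indicator_of_mem (mem_Icc_of_mem_Ej (hC j) ht),
      Real.norm_of_nonneg (fmax_nonneg C t)]
    exact fmax_le hM hC t
  · rw [indicator_of_notMem ht, norm_zero]
    exact indicator_nonneg (fun _ _ => hM) t

lemma eventually_fj_eq_fmax {C₀ : Fin n → ℝ} {j : Fin n} {t : ℝ}
    (hmax : ∀ k ≠ j, fj n x C₀ k t < fj n x C₀ j t) (hpos : 0 < fj n x C₀ j t) :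
    ∀ᶠ C in 𝓝 C₀, fj n x C j t = fmax n x C t := by
  have hle : ∀ᶠ C in 𝓝 C₀, ∀ k, fj n x C k t ≤ fj n x C j t := by
    refine eventually_all.mpr fun k => ?_
    by_cases hk : k = j
    · exact .of_forall fun C => hk ▸ le_rfl
    · exact ((continuous_fj_left k t).continuousAt.eventually_lt
        (continuous_fj_left j t).continuousAt (hmax k hk)).mono
        fun _ => le_of_lt
  have h0 := continuousAt_const.eventually_lt (continuous_fj_left j t).continuousAt hpos
  filter_upwards [hle, h0] with C hC hC0
  exact (fmax_eq_fj_of_forall_le hC hC0.le).symm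

lemma continuousAt_indicator_Ej_fmax (hx : Function.Injective x) {C₀ : Fin n → ℝ} {j : Fin n}
    {t : ℝ} (ht : ∀ k ≠ j, t ≠ gam n x C₀ j k) :
    ContinuousAt (fun C => (Ej n x C j).indicator (fmax n x C) t) C₀ := by
  have hfmax := (continuous_fmax_left (x := x) t).continuousAt (x := C₀)
  rcases (fj_le_fmax (x := x) C₀ j t).lt_or_eq with hlt | heq
  · refine (continuousAt_const (y := (0 : ℝ))).congr ?_
    filter_upwards [(continuous_fj_left j t).continuousAt.eventually_lt hfmax hlt] with C hC
    exact (indicator_of_notMem (mem_Ej.not.mpr hC.ne) _).symm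
  rcases (fmax_nonneg (x := x) C₀ t).eq_or_lt with hzero | hpos
  · have h0 : (Ej n x C₀ j).indicator (fmax n x C₀) t = 0 := by
      rw [indicator_of_mem (mem_Ej.mpr heq), ← hzero]
    rw [ContinuousAt, h0]
    exact squeeze_zero (fun C => indicator_nonneg (fun s _ => fmax_nonneg C s) t)
      (fun C => indicator_le_self' (fun s _ => fmax_nonneg C s) t) (hzero ▸ hfmax)
  · have hmax : ∀ k ≠ j, fj n x C₀ k t < fj n x C₀ j t := fun k hk =>
      ((fj_le_fmax C₀ k t).trans heq.ge).lt_of_ne fun h =>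
        ht k hk (eq_gam_of_fj_eq (hx.ne (Ne.symm hk)) h.symm)
    refine hfmax.congr ?_
    filter_upwards [eventually_fj_eq_fmax hmax (heq ▸ hpos)] with C hC
    exact (indicator_of_mem (mem_Ej.mpr hC) _).symm

lemma continuous_Fj (hx : Function.Injective x) (j : Fin n) :
    Continuous fun C => Fj n x C j := by
  simp only [Fj_eq_integral_indicator]
  refine continuous_iff_continuousAt.mpr fun C₀ => ?_
  set M := ‖C₀‖ + 1
  have hM : 0 ≤ M := by positivity
  have hnear : ∀ᶠ C in 𝓝 C₀, ∀ k, C k ≤ M := by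
    filter_upwards [continuous_norm.continuousAt.eventually_lt continuousAt_const
      (lt_add_one ‖C₀‖)] with C hC k
    exact (le_abs_self _).trans ((norm_le_pi_norm C k).trans hC.le)
  have hties : ∀ᵐ t, t ∉ range (gam n x C₀ j) :=
    measure_eq_zero_iff_ae_notMem.mp ((finite_range _).measure_zero volume)
  refine continuousAt_of_dominated
    (bound := (Icc (x j - √M) (x j + √M)).indicator fun _ => M) ?_ ?_ ?_ ?_
  · exact .of_forall fun C => ((continuous_fmax_right C).stronglyMeasurable.indicator
      (measurableSet_Ej C j)).aestronglyMeasurable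
  · filter_upwards [hnear] with C hC
    exact .of_forall (norm_indicator_Ej_fmax_le hM hC j)
  · exact (integrable_indicator_iff measurableSet_Icc).mpr
      (integrableOn_const measure_Icc_lt_top.ne)
  · filter_upwards [hties] with t ht
    exact continuousAt_indicator_Ej_fmax hx fun k _ h => ht ⟨k, h.symm⟩

end

theorem stmt_17_general (n : ℕ) (x : Fin n → ℝ) (hx : StrictMono x) :
    Continuous (fun C : Fin n → ℝ => Fvec n x C) :=
  continuous_pi fun j =>
    have : Nonempty (Fin n) := ⟨j⟩
    continuous_Fj hx.injective j

/-- The map `F : ℝ^n → ℝ^n` is continuous. -/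
theorem stmt_17 (n : ℕ) (hn : 1 ≤ n) (x : Fin n → ℝ) (hx : StrictMono x) :
    Continuous (fun C : Fin n → ℝ => Fvec n x C) :=
  stmt_17_general n x hx
end
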